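/- Let C be a small category whose morphisms are mono and homsets are finite, let H be an entropy on partitions and let r̃ be the associated Ramsey entropy, r̃(X) = inf_{A : X→A} sup_{B : A→B} min_{Λ ∈ Ess(B choose A)} H(Λ). If there is a morphism X → Y then r̃(X) ≤ r̃(Y). -/

import Mathlib

open CategoryTheory

variable {C : Type} [SmallCategory C]

def copySetoid (A B : C) : Setoid (A ⟶ B) where
  r f g := ∃ α : Aut A, f = α.hom ≫ g
  iseqv := by
    constructor
    · intro f; exact ⟨Iso.refl A, by simp⟩
    · rintro f g ⟨α, rfl⟩; exact ⟨α.symm, (Iso.inv_hom_id_assoc α _).symm⟩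
    · rintro f g h ⟨α, rfl⟩ ⟨β, rfl⟩; exact ⟨α ≪≫ β, (Category.assoc _ _ _).symm⟩

def Copies (A B : C) := Quotient (copySetoid A B)

def lmul {A B D : C} (w : B ⟶ D) : Copies A B → Copies A D :=
  Quotient.map' (fun f => f ≫ w) (by rintro f g ⟨α, rfl⟩; exact ⟨α, by simp⟩)

instance (A B : C) [Finite (A ⟶ B)] : Finite (Copies A B) := Quotient.finite _

def Coarser {X : Type*} (S P : Set (Set X)) : Prop := ∀ β ∈ P, ∃ γ ∈ S, β ⊆ γ

def pullPart {A B D : C} (w : B ⟶ D) (P : Set (Set (Copies A D))) : Set (Set (Copies A B)) :=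
  {S | S ≠ ∅ ∧ ∃ γ ∈ P, S = lmul w ⁻¹' γ}

def partOfColoring {X : Type*} {k : ℕ} (χ : X → Fin k) : Set (Set X) :=
  {S | S ≠ ∅ ∧ ∃ i, S = χ ⁻¹' {i}}

def Essential (A B : C) (Λ : Set (Set (Copies A B))) : Prop :=
  Setoid.IsPartition Λ ∧
    ∃ D : C, ∀ P : Set (Set (Copies A D)), Setoid.IsPartition P →
      ∃ w : B ⟶ D, Coarser Λ (pullPart w P)

def sArrow (A B D : C) (k t : ℕ) : Prop :=
  ∀ χ : Copies A D → Fin k, ∃ w : B ⟶ D, (χ '' Set.range (lmul w)).ncard ≤ t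

noncomputable def sDeg (A : C) : ℕ∞ :=
  sInf {n : ℕ∞ | ∃ m : ℕ, 0 < m ∧ n = m ∧ ∀ (k : ℕ) (B : C), ∃ D, sArrow A B D k m}

def eArrow (A B D : C) (k t : ℕ) : Prop :=
  ∀ χ : (A ⟶ D) → Fin k, ∃ w : B ⟶ D, (χ '' {h | ∃ f : A ⟶ B, h = f ≫ w}).ncard ≤ t

noncomputable def eDeg (A : C) : ℕ∞ :=
  sInf {n : ℕ∞ | ∃ m : ℕ, 0 < m ∧ n = m ∧ ∀ (k : ℕ) (B : C), ∃ D, eArrow A B D k m}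

noncomputable def elog : ℕ∞ → EReal :=
  WithTop.recTopCoe ⊤ (fun m : ℕ => ((Real.logb 2 m : ℝ) : EReal))
structure PartEntropy where
  H : ∀ (X : Type) [Finite X], Set (Set X) → EReal
  le_log : ∀ (X : Type) [Finite X] (P : Set (Set X)), Setoid.IsPartition P →
    H X P ≤ ((Real.logb 2 P.ncard : ℝ) : EReal)
  eq_zero_iff : ∀ (X : Type) [Finite X] (P : Set (Set X)), Setoid.IsPartition P →
    (H X P = 0 ↔ P = {Set.univ})
  mono : ∀ (X : Type) [Finite X] (S P : Set (Set X)), Setoid.IsPartition S →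
    Setoid.IsPartition P → Coarser S P → H X S ≤ H X P
  iso_invariant : ∀ (X Y : Type) [Finite X] [Finite Y] (P : Set (Set X)) (Q : Set (Set Y))
    (e : X ≃ Y), Setoid.IsPartition P → Q = (Set.image e) '' P → H X P = H Y Q
  add : ∀ (X Y : Type) [Finite X] [Finite Y] (P : Set (Set X)) (Q : Set (Set Y)),
    Setoid.IsPartition P → Setoid.IsPartition Q →
    H (X × Y) (Set.image2 (· ×ˢ ·) P Q) = H X P + H Y Q

variable [∀ X Y : C, Finite (X ⟶ Y)]

noncomputable def phi (E : PartEntropy) (A : C) : EReal :=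
  ⨆ (B : C) (_ : Nonempty (A ⟶ B)),
    sInf {x : EReal | ∃ Λ : Set (Set (Copies A B)), Essential A B Λ ∧ x = E.H (Copies A B) Λ}

noncomputable def rEnt (E : PartEntropy) (X : C) : EReal :=
  ⨅ (A : C) (_ : Nonempty (X ⟶ A)), phi E A

noncomputable def phiBol (A : C) : EReal :=
  ⨆ (B : C) (_ : Nonempty (A ⟶ B)),
    sInf {x : EReal | ∃ Λ : Set (Set (Copies A B)), Essential A B Λ ∧
      x = ((Real.logb 2 Λ.ncard : ℝ) : EReal)}

noncomputable def rBol (X : C) : EReal :=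
  ⨅ (A : C) (_ : Nonempty (X ⟶ A)), phiBol A

/-- the Ramsey entropy based on an entropy on partitions is
monotonous: `X → Y` implies `r̃(X) ≤ r̃(Y)`. -/
theorem stmt_11 (hmono : ∀ {X Y : C} (f : X ⟶ Y), Mono f)
    (E : PartEntropy) (X Y : C) (h : Nonempty (X ⟶ Y)) :
    rEnt E X ≤ rEnt E Y := by
  refine le_iInf₂ fun A hA => ?_
  exact iInf₂_le A ⟨h.some ≫ hA.some⟩
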